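/- arXiv:1107.5972 — 3 statements merged into one kernel-verified Lean document; each statement's English description precedes it below -/
import Mathlib

section
/- Let F : ℝ → ℝ be a cumulative distribution function. Suppose there exist sequences (a_m) of positive reals and (b_m) of reals and a cumulative distribution function H which is nondegenerate (there exists x with 0 < H(x) < 1) such that for every continuity point x of H, F(x/a_m + b_m)^m → H(x) as m → ∞. Then there exist a > 0 and b ∈ ℝ such that H has one of the following three forms: (Type 1, Gumbel) H(x) = exp(−e^{−(a x + b)}) for all x ∈ ℝ; (Type 2, Fréchet) for some ξ > 0, H(x) = 0 when a x + b ≤ 0 and H(x) = exp(−(a x + b)^{−ξ}) when a x + b > 0; (Type 3, Weibull) for some ξ > 0, H(x) = exp(−(−(a x + b))^{ξ}) when a x + b ≤ 0 and H(x) = 1 when a x + b > 0. -/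
open Filter Set Topology Real

/-- A cumulative distribution function: monotone nondecreasing, right-continuous,
with values in `[0,1]`, tending to `0` at `-∞` and to `1` at `+∞`. -/
def IsCDF (F : ℝ → ℝ) : Prop :=
  Monotone F ∧ (∀ x, ContinuousWithinAt F (Set.Ici x) x) ∧
    (∀ x, F x ∈ Set.Icc (0 : ℝ) 1) ∧
    Filter.Tendsto F Filter.atBot (nhds 0) ∧ Filter.Tendsto F Filter.atTop (nhds 1)

/-!
Replacing `m` by `m * n` in the convergence and applying the convergence-of-types theorem shows
that `H` is max-stable: `H x = H (c n * x + d n) ^ n`. These affine maps are unique, hence compose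
multiplicatively in `n`, so either they are all translations or they are all dilations about a
common centre `μ`. After the substitution `x = s`, `x = μ + exp s` or `x = μ - exp (-s)`
respectively, `Φ s = Φ (s + e n) ^ n` with `e` additive and monotone, so `e n = τ * log n`. Then
`log (-log Φ)` is antitone and drops by `log n` over a step `τ * log n`, which by density of the
numbers `log (m / n)` forces it to be affine.
-/

namespace IsCDF

variable {U : ℝ → ℝ}

theorem monotone (hU : IsCDF U) : Monotone U := hU.1

theorem nonneg (hU : IsCDF U) (x : ℝ) : 0 ≤ U x := (hU.2.2.1 x).1

theorem le_one (hU : IsCDF U) (x : ℝ) : U x ≤ 1 := (hU.2.2.1 x).2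

theorem tendsto_atBot (hU : IsCDF U) : Tendsto U atBot (𝓝 0) := hU.2.2.2.1

theorem tendsto_atTop (hU : IsCDF U) : Tendsto U atTop (𝓝 1) := hU.2.2.2.2

theorem continuousWithinAt_Ici (hU : IsCDF U) (x : ℝ) : ContinuousWithinAt U (Ici x) x := hU.2.1 x

theorem le_apply_of_forall_lt (hU : IsCDF U) {x v : ℝ} (h : ∀ y, x < y → v ≤ U y) : v ≤ U x :=
  ge_of_tendsto ((hU.continuousWithinAt_Ici x).mono Ioi_subset_Ici_self).tendsto
    (eventually_nhdsWithin_of_forall h)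

theorem pow (hU : IsCDF U) {n : ℕ} (hn : n ≠ 0) : IsCDF fun x => U x ^ n := by
  refine ⟨fun x y hxy => pow_le_pow_left₀ (hU.nonneg x) (hU.monotone hxy) n,
    fun x => (hU.continuousWithinAt_Ici x).pow n,
    fun x => ⟨pow_nonneg (hU.nonneg x) n, pow_le_one₀ (hU.nonneg x) (hU.le_one x)⟩, ?_, ?_⟩
  · simpa [zero_pow hn] using hU.tendsto_atBot.pow n
  · simpa using hU.tendsto_atTop.pow n

theorem exists_forall_le_iff (hU : IsCDF U) {u : ℝ} (hu0 : 0 < u) (hu1 : u < 1) :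
    ∃ g, ∀ y, u ≤ U y ↔ g ≤ y := by
  set S := {y | u ≤ U y}
  obtain ⟨M, hM⟩ := (hU.tendsto_atBot.eventually (eventually_lt_nhds hu0)).exists_forall_of_atBot
  have hne : S.Nonempty :=
    ((hU.tendsto_atTop.eventually (eventually_gt_nhds hu1)).exists).imp fun _ hy => hy.le
  have hbdd : BddBelow S := ⟨M, fun y hy => le_of_not_gt fun hyM => (hM y hyM.le).not_ge hy⟩
  refine ⟨sInf S, fun y => ⟨fun hy => csInf_le hbdd hy, fun hy => ?_⟩⟩
  refine (hU.le_apply_of_forall_lt fun z hz => ?_).trans (hU.monotone hy)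
  obtain ⟨s, hs, hsz⟩ := exists_lt_of_csInf_lt hne hz
  exact hs.trans (hU.monotone hsz.le)

theorem affine_unique (hU : IsCDF U) (hnd : ∃ x, 0 < U x ∧ U x < 1) {c d c' d' : ℝ}
    (hc : 0 < c) (hc' : 0 < c') (h : ∀ x, U (c * x + d) = U (c' * x + d')) :
    c = c' ∧ d = d' := by
  -- both maps must send the same point to the left end `g` of each superlevel set `[g, ∞)`
  have hend : ∀ u g, (∀ y, u ≤ U y ↔ g ≤ y) → c' * (g - d) = c * (g - d') := by
    intro u g hg
    have hiff : ∀ x, g ≤ c * x + d ↔ g ≤ c' * x + d' := fun x => by rw [← hg, ← hg, h]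
    have h1 := (hiff ((g - d) / c)).1 (by field_simp; linarith)
    have h2 := (hiff ((g - d') / c')).2 (by field_simp; linarith)
    rw [mul_div_assoc', div_add' _ _ _ hc.ne', le_div_iff₀ hc] at h1
    rw [mul_div_assoc', div_add' _ _ _ hc'.ne', le_div_iff₀ hc'] at h2
    linarith
  obtain ⟨x₀, h0, h1⟩ := hnd
  obtain ⟨g₁, hg₁⟩ := hU.exists_forall_le_iff h0 h1
  obtain ⟨g₂, hg₂⟩ := hU.exists_forall_le_iff (u := (U x₀ + 1) / 2) (by linarith) (by linarith)
  have hlt : g₁ < g₂ :=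
    ((hg₁ x₀).1 le_rfl).trans_lt (lt_of_not_ge fun h => ((hg₂ x₀).2 h).not_gt (by linarith))
  have e₁ := hend _ _ hg₁
  have e₂ := hend _ _ hg₂
  have hcc : c = c' := by nlinarith
  subst hcc
  exact ⟨rfl, by nlinarith⟩

end IsCDF

section ConvergenceOfTypes

variable {G : ℕ → ℝ → ℝ} {U V : ℝ → ℝ} {E : Set ℝ} {γ δ : ℕ → ℝ} {c d : ℝ}

theorem eventually_lt_of_tendsto_monotone (hG : ∀ m, Monotone (G m)) {l : Filter ℕ}
    {y z : ℕ → ℝ} {v w : ℝ} (hy : Tendsto (fun m => G m (y m)) l (𝓝 v))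
    (hz : Tendsto (fun m => G m (z m)) l (𝓝 w)) (hvw : v < w) : ∀ᶠ m in l, y m < z m :=
  (hy.eventually_lt hz hvw).mono fun m hm => lt_of_not_ge fun h => hm.not_ge (hG m h)

theorem exists_subseq_tendsto_of_tendsto_monotone (hG : ∀ m, Monotone (G m)) (hU : IsCDF U)
    (hV : IsCDF V) (hVnd : ∃ x, 0 < V x ∧ V x < 1) (hE : E.Countable) (hγ : ∀ m, 0 < γ m)
    (hGU : ∀ x, x ∉ E → Tendsto (fun m => G m x) atTop (𝓝 (U x)))
    (hGV : ∀ x, x ∉ E → Tendsto (fun m => G m (γ m * x + δ m)) atTop (𝓝 (V x))) :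
    ∃ φ : ℕ → ℕ, StrictMono φ ∧ ∃ c ≥ 0, ∃ d,
      Tendsto (γ ∘ φ) atTop (𝓝 c) ∧ Tendsto (δ ∘ φ) atTop (𝓝 d) := by
  have hD : Dense Eᶜ := hE.dense_compl ℝ
  obtain ⟨x₀, hx₀0, hx₀1⟩ := hVnd
  obtain ⟨u, hu, hVu⟩ := mem_nhdsGE_iff_exists_Ico_subset.1
    ((hV.continuousWithinAt_Ici x₀).eventually (eventually_lt_nhds hx₀1))
  obtain ⟨p, hpE, hp⟩ := hD.exists_between hu
  obtain ⟨q, hqE, hq⟩ := hD.exists_between hp.2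
  have hVp : 0 < V p := hx₀0.trans_le (hV.monotone hp.1.le)
  have hVq : V q < 1 := hVu ⟨hp.1.le.trans hq.1.le, hq.2⟩
  obtain ⟨M, hM⟩ := (hU.tendsto_atBot.eventually (eventually_lt_nhds hVp)).exists_forall_of_atBot
  obtain ⟨A, hAE, hAM⟩ := hD.exists_lt M
  obtain ⟨N, hN⟩ := (hU.tendsto_atTop.eventually (eventually_gt_nhds hVq)).exists_forall_of_atTop
  obtain ⟨B, hBE, hNB⟩ := hD.exists_gt N
  have hlow := eventually_lt_of_tendsto_monotone hG (hGU A hAE) (hGV p hpE) (hM A hAM.le)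
  have hhigh := eventually_lt_of_tendsto_monotone hG (hGV q hqE) (hGU B hBE) (hN B hNB.le)
  set Γ := (B - A) / (q - p)
  have hbox : ∀ᶠ m in atTop, (γ m, γ m * p + δ m) ∈ Icc 0 Γ ×ˢ Icc A B := by
    filter_upwards [hlow, hhigh] with m hl hh
    have hγΓ : γ m ≤ Γ := by
      rw [le_div_iff₀ (by linarith [hq.1])]
      nlinarith [hγ m, hq.1]
    exact ⟨⟨(hγ m).le, hγΓ⟩, hl.le, by nlinarith [hγ m, hq.1]⟩
  obtain ⟨⟨c, d'⟩, ⟨⟨hc, -⟩, -⟩, φ, hφ, hlim⟩ :=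
    (isCompact_Icc.prod isCompact_Icc).tendsto_subseq' hbox.frequently
  have hγc : Tendsto (γ ∘ φ) atTop (𝓝 c) := (continuous_fst.tendsto _).comp hlim
  refine ⟨φ, hφ, c, hc, d' - c * p, hγc, ?_⟩
  have := ((continuous_snd.tendsto _).comp hlim).sub (hγc.mul_const p)
  exact this.congr fun k => by simp

theorem le_of_tendsto_monotone_of_lt (hG : ∀ m, Monotone (G m)) (hU : Monotone U)
    (hE : E.Countable) (hγ : Tendsto γ atTop (𝓝 c)) (hδ : Tendsto δ atTop (𝓝 d))
    (hGU : ∀ x, x ∉ E → Tendsto (fun m => G m x) atTop (𝓝 (U x)))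
    (hGV : ∀ x, x ∉ E → Tendsto (fun m => G m (γ m * x + δ m)) atTop (𝓝 (V x)))
    {x s : ℝ} (hx : x ∉ E) (hs : c * x + d < s) : V x ≤ U s := by
  obtain ⟨s', hs'E, hs'⟩ := (hE.dense_compl ℝ).exists_between hs
  refine (le_of_tendsto_of_tendsto (hGV x hx) (hGU s' hs'E) ?_).trans (hU hs'.2.le)
  filter_upwards [((hγ.mul_const x).add hδ).eventually_lt_const hs'.1] with m hm
  exact hG m hm.le

theorem le_of_tendsto_monotone_of_gt (hG : ∀ m, Monotone (G m)) (hU : Monotone U)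
    (hE : E.Countable) (hγ : Tendsto γ atTop (𝓝 c)) (hδ : Tendsto δ atTop (𝓝 d))
    (hGU : ∀ x, x ∉ E → Tendsto (fun m => G m x) atTop (𝓝 (U x)))
    (hGV : ∀ x, x ∉ E → Tendsto (fun m => G m (γ m * x + δ m)) atTop (𝓝 (V x)))
    {x s : ℝ} (hx : x ∉ E) (hs : s < c * x + d) : U s ≤ V x := by
  obtain ⟨s', hs'E, hs'⟩ := (hE.dense_compl ℝ).exists_between hs
  refine (hU hs'.1.le).trans (le_of_tendsto_of_tendsto (hGU s' hs'E) (hGV x hx) ?_)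
  filter_upwards [((hγ.mul_const x).add hδ).eventually_const_lt hs'.2] with m hm
  exact hG m hm.le

/-- With `c = 0` the limit `V` would force `U` to jump from `0` to `1` at `d`. -/
theorem pos_of_tendsto_monotone (hG : ∀ m, Monotone (G m)) (hU : IsCDF U)
    (hUnd : ∃ x, 0 < U x ∧ U x < 1) (hV : IsCDF V) (hE : E.Countable) (hc : 0 ≤ c)
    (hγ : Tendsto γ atTop (𝓝 c)) (hδ : Tendsto δ atTop (𝓝 d))
    (hGU : ∀ x, x ∉ E → Tendsto (fun m => G m x) atTop (𝓝 (U x)))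
    (hGV : ∀ x, x ∉ E → Tendsto (fun m => G m (γ m * x + δ m)) atTop (𝓝 (V x))) : 0 < c := by
  refine hc.lt_of_ne' fun hc0 => ?_
  subst hc0
  have hD : Dense Eᶜ := hE.dense_compl ℝ
  have hone : ∀ s, d < s → 1 ≤ U s := fun s hs => by
    refine le_of_tendsto hV.tendsto_atTop (Eventually.of_forall fun x => ?_)
    obtain ⟨x', hx'E, hxx'⟩ := hD.exists_gt x
    exact (hV.monotone hxx'.le).trans
      (le_of_tendsto_monotone_of_lt hG hU.monotone hE hγ hδ hGU hGV hx'E (by simpa using hs))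
  have hzero : ∀ s, s < d → U s ≤ 0 := fun s hs => by
    refine ge_of_tendsto hV.tendsto_atBot (Eventually.of_forall fun x => ?_)
    obtain ⟨x', hx'E, hx'x⟩ := hD.exists_lt x
    exact (le_of_tendsto_monotone_of_gt hG hU.monotone hE hγ hδ hGU hGV hx'E
      (by simpa using hs)).trans (hV.monotone hx'x.le)
  obtain ⟨x₀, h0, h1⟩ := hUnd
  rcases lt_or_ge x₀ d with hx₀ | hx₀
  · exact (hzero x₀ hx₀).not_gt h0
  · exact (hU.le_apply_of_forall_lt fun y hy => hone y (hx₀.trans_lt hy)).not_gt h1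

theorem eq_comp_affine_of_tendsto_monotone (hG : ∀ m, Monotone (G m)) (hU : IsCDF U)
    (hV : IsCDF V) (hE : E.Countable) (hc : 0 < c)
    (hγ : Tendsto γ atTop (𝓝 c)) (hδ : Tendsto δ atTop (𝓝 d))
    (hGU : ∀ x, x ∉ E → Tendsto (fun m => G m x) atTop (𝓝 (U x)))
    (hGV : ∀ x, x ∉ E → Tendsto (fun m => G m (γ m * x + δ m)) atTop (𝓝 (V x))) (x : ℝ) :
    V x = U (c * x + d) := by
  have hD : Dense Eᶜ := hE.dense_compl ℝ
  apply le_antisymm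
  · refine hU.le_apply_of_forall_lt fun z hz => ?_
    obtain ⟨x', hx'E, hx'⟩ := hD.exists_between (show x < (z - d) / c by
      rw [lt_div_iff₀ hc]; linarith)
    refine (hV.monotone hx'.1.le).trans
      (le_of_tendsto_monotone_of_lt hG hU.monotone hE hγ hδ hGU hGV hx'E ?_)
    have := (lt_div_iff₀ hc).1 hx'.2
    linarith
  · refine hV.le_apply_of_forall_lt fun y hy => ?_
    obtain ⟨x', hx'E, hx'⟩ := hD.exists_between hy
    refine (le_of_tendsto_monotone_of_gt hG hU.monotone hE hγ hδ hGU hGV hx'E ?_).trans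
      (hV.monotone hx'.2.le)
    nlinarith [hx'.1]

theorem exists_eq_comp_affine_of_tendsto_monotone (hG : ∀ m, Monotone (G m)) (hU : IsCDF U)
    (hUnd : ∃ x, 0 < U x ∧ U x < 1) (hV : IsCDF V) (hVnd : ∃ x, 0 < V x ∧ V x < 1)
    (hE : E.Countable) (hγ : ∀ m, 0 < γ m)
    (hGU : ∀ x, x ∉ E → Tendsto (fun m => G m x) atTop (𝓝 (U x)))
    (hGV : ∀ x, x ∉ E → Tendsto (fun m => G m (γ m * x + δ m)) atTop (𝓝 (V x))) :
    ∃ c > 0, ∃ d, ∀ x, V x = U (c * x + d) := by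
  obtain ⟨φ, hφ, c, hc, d, hγc, hδd⟩ :=
    exists_subseq_tendsto_of_tendsto_monotone hG hU hV hVnd hE hγ hGU hGV
  have hGUφ : ∀ x, x ∉ E → Tendsto (fun k => G (φ k) x) atTop (𝓝 (U x)) :=
    fun x hx => (hGU x hx).comp hφ.tendsto_atTop
  have hGVφ : ∀ x, x ∉ E → Tendsto (fun k => G (φ k) ((γ ∘ φ) k * x + (δ ∘ φ) k)) atTop
      (𝓝 (V x)) := fun x hx => (hGV x hx).comp hφ.tendsto_atTop
  have hc' := pos_of_tendsto_monotone (fun k => hG (φ k)) hU hUnd hV hE hc hγc hδd hGUφ hGVφ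
  exact ⟨c, hc', d, eq_comp_affine_of_tendsto_monotone (fun k => hG (φ k)) hU hV hE hc' hγc hδd
    hGUφ hGVφ⟩

end ConvergenceOfTypes

def IsMaxStable (H : ℝ → ℝ) : Prop :=
  ∀ n : ℕ, 0 < n → ∃ c > 0, ∃ d, ∀ x, H x = H (c * x + d) ^ n

theorem isMaxStable_of_tendsto_pow {F H : ℝ → ℝ} (hF : IsCDF F) {a b : ℕ → ℝ}
    (ha : ∀ m, 0 < a m) (hH : IsCDF H) (hnd : ∃ x, 0 < H x ∧ H x < 1)
    (hconv : ∀ x, ContinuousAt H x →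
      Tendsto (fun m : ℕ => F (x / a m + b m) ^ m) atTop (𝓝 (H x))) :
    IsMaxStable H := by
  intro n hn
  obtain ⟨x₀, h0, h1⟩ := hnd
  have hmono : ∀ m, Monotone fun t => F (t / a m + b m) ^ (m * n) := fun m t t' h =>
    pow_le_pow_left₀ (hF.nonneg _) (hF.monotone (by gcongr; exact (ha m).le)) _
  have hmn : Tendsto (fun m => m * n) atTop atTop :=
    tendsto_atTop_mono (fun m => Nat.le_mul_of_pos_right m hn) tendsto_id
  refine exists_eq_comp_affine_of_tendsto_monotone hmono (hH.pow hn.ne')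
    ⟨x₀, pow_pos h0 n, pow_lt_one₀ (hH.nonneg x₀) h1 hn.ne'⟩ hH ⟨x₀, h0, h1⟩
    (E := {x | ¬ContinuousAt H x}) hH.monotone.countable_not_continuousAt
    (γ := fun m => a m / a (m * n)) (δ := fun m => a m * (b (m * n) - b m))
    (fun m => div_pos (ha m) (ha _)) (fun x hx => ?_) (fun x hx => ?_)
  · simpa only [pow_mul] using (hconv x (not_not.1 hx)).pow n
  · refine ((hconv x (not_not.1 hx)).comp hmn).congr fun m => ?_
    have := (ha m).ne'
    have := (ha (m * n)).ne'
    simp only [Function.comp_apply]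
    congr 2
    field_simp
    ring

theorem eq_mul_log_of_add_of_monotone {f : ℕ → ℝ}
    (hadd : ∀ m n, 0 < m → 0 < n → f (m * n) = f m + f n)
    (hmono : ∀ m n, 0 < m → m ≤ n → f m ≤ f n) {n : ℕ} (hn : 0 < n) :
    f n = f 2 / log 2 * log n := by
  have hf1 : f 1 = 0 := by simpa using hadd 1 1 one_pos one_pos
  have hpow : ∀ m, 0 < m → ∀ k : ℕ, f (m ^ k) = k * f m := by
    intro m hm k
    induction k with
    | zero => simp [hf1]
    | succ k ih => rw [pow_succ, hadd _ _ (by positivity) hm, ih]; push_cast; ring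
  have hlog2 : 0 < log 2 := log_pos one_lt_two
  set r := f 2 / log 2
  have hr : 0 ≤ r := div_nonneg (hf1 ▸ hmono 1 2 one_pos one_le_two) hlog2.le
  have hr2 : r * log 2 = f 2 := div_mul_cancel₀ _ hlog2.ne'
  -- with `2 ^ j ≤ N ≤ 2 ^ (j + 1)`, both `f N` and `r * log N` lie in `[j * f 2, (j + 1) * f 2]`
  have hbound : ∀ N, 0 < N → |f N - r * log N| ≤ f 2 := by
    intro N hN
    set j := Nat.log 2 N
    have hlo : 2 ^ j ≤ N := Nat.pow_log_le_self 2 hN.ne'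
    have hhi : N ≤ 2 ^ (j + 1) := (Nat.lt_pow_succ_log_self one_lt_two N).le
    have hflo := hmono _ _ (by positivity) hlo
    have hfhi := hmono _ _ hN hhi
    rw [hpow 2 two_pos] at hflo hfhi
    have hllo : j * log 2 ≤ log N := by
      rw [← log_pow]; exact log_le_log (by positivity) (by exact_mod_cast hlo)
    have hlhi : log N ≤ (j + 1 : ℕ) * log 2 := by
      rw [← log_pow]; exact log_le_log (by positivity) (by exact_mod_cast hhi)
    have hrlo : j * f 2 ≤ r * log N := by
      calc j * f 2 = r * (j * log 2) := by rw [← hr2]; ring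
        _ ≤ r * log N := mul_le_mul_of_nonneg_left hllo hr
    have hrhi : r * log N ≤ (j + 1 : ℕ) * f 2 := by
      calc r * log N ≤ r * ((j + 1 : ℕ) * log 2) := mul_le_mul_of_nonneg_left hlhi hr
        _ = (j + 1 : ℕ) * f 2 := by rw [← hr2]; ring
    push_cast at hfhi hrhi
    rw [abs_le]
    constructor <;> linarith
  have hk : ∀ k : ℕ, k * |f n - r * log n| ≤ f 2 := by
    intro k
    have := hbound (n ^ k) (by positivity)
    rwa [hpow n hn, Nat.cast_pow, log_pow, ← mul_assoc, mul_comm r, mul_assoc, ← mul_sub,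
      abs_mul, Nat.abs_cast] at this
  have habs : |f n - r * log n| = 0 := by
    by_contra hne
    obtain ⟨k, hk'⟩ := exists_nat_gt (f 2 / |f n - r * log n|)
    rw [div_lt_iff₀ (lt_of_le_of_ne (abs_nonneg _) (Ne.symm hne))] at hk'
    linarith [hk k]
  linarith [abs_eq_zero.1 habs]

theorem exists_log_sub_log_mem_Ioo {a b : ℝ} (hab : a < b) :
    ∃ m n : ℕ, 0 < m ∧ 0 < n ∧ log m - log n ∈ Ioo a b := by
  obtain ⟨q, hq₁, hq₂⟩ := exists_rat_btwn (exp_lt_exp.2 hab)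
  have hq : (0 : ℝ) < q := (exp_pos a).trans hq₁
  have hnum : 0 < q.num := Rat.num_pos.2 (by exact_mod_cast hq)
  have hm : 0 < q.num.toNat := by omega
  have hcast : (q : ℝ) = (q.num.toNat : ℝ) / q.den := by
    rw [Rat.cast_def]
    congr 1
    exact_mod_cast (Int.toNat_of_nonneg hnum.le).symm
  refine ⟨q.num.toNat, q.den, hm, q.pos, ?_⟩
  rw [← log_div (by positivity) (by positivity), ← hcast]
  exact ⟨(lt_log_iff_exp_lt hq).2 hq₁, (log_lt_iff_lt_exp hq).2 hq₂⟩

theorem antitone_eq_sub_of_add_log {φ : ℝ → ℝ} (hφ : Antitone φ)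
    (h : ∀ n : ℕ, 0 < n → ∀ s, φ (s + log n) = φ s - log n) (s : ℝ) : φ s = φ 0 - s := by
  have hq : ∀ m n : ℕ, 0 < m → 0 < n → φ (log m - log n) = φ 0 - (log m - log n) := by
    intro m n hm hn
    have h₁ := h m hm (-log n)
    have h₂ := h n hn (-log n)
    rw [neg_add_cancel] at h₂
    rw [neg_add_eq_sub] at h₁
    linarith
  apply le_antisymm
  · refine le_of_forall_pos_lt_add fun ε hε => ?_
    obtain ⟨m, n, hm, hn, hlo, hhi⟩ := exists_log_sub_log_mem_Ioo (show s - ε < s by linarith)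
    have := hφ hhi.le
    rw [hq m n hm hn] at this
    linarith
  · refine le_of_forall_pos_lt_add fun ε hε => ?_
    obtain ⟨m, n, hm, hn, hlo, hhi⟩ := exists_log_sub_log_mem_Ioo (show s < s + ε by linarith)
    have := hφ hlo.le
    rw [hq m n hm hn] at this
    linarith

def IsGumbelType (H : ℝ → ℝ) (a b : ℝ) : Prop :=
  ∀ x, H x = exp (-exp (-(a * x + b)))

def IsFrechetType (H : ℝ → ℝ) (a b : ℝ) : Prop :=
  ∃ ξ > (0 : ℝ), ∀ x,
    (a * x + b ≤ 0 → H x = 0) ∧ (0 < a * x + b → H x = exp (-(a * x + b) ^ (-ξ)))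

def IsWeibullType (H : ℝ → ℝ) (a b : ℝ) : Prop :=
  ∃ ξ > (0 : ℝ), ∀ x,
    (a * x + b ≤ 0 → H x = exp (-(-(a * x + b)) ^ ξ)) ∧ (0 < a * x + b → H x = 1)

namespace IsGumbelType

variable {Φ : ℝ → ℝ} {a b : ℝ}

theorem tendsto_atBot (hΦ : IsGumbelType Φ a b) (ha : 0 < a) : Tendsto Φ atBot (𝓝 0) := by
  have hlin : Tendsto (fun s => a * s + b) atBot atBot :=
    tendsto_atBot_add_const_right _ b (tendsto_id.const_mul_atBot ha)
  rw [funext hΦ]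
  exact tendsto_exp_atBot.comp
    (tendsto_neg_atTop_atBot.comp (tendsto_exp_atTop.comp (tendsto_neg_atBot_atTop.comp hlin)))

theorem tendsto_atTop (hΦ : IsGumbelType Φ a b) (ha : 0 < a) : Tendsto Φ atTop (𝓝 1) := by
  have hlin : Tendsto (fun s => a * s + b) atTop atTop :=
    tendsto_atTop_add_const_right _ b (tendsto_id.const_mul_atTop ha)
  have hexp : Tendsto (fun s => -exp (-(a * s + b))) atTop (𝓝 0) := by
    simpa using (tendsto_exp_atBot.comp (tendsto_neg_atTop_atBot.comp hlin)).neg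
  rw [funext hΦ, ← exp_zero]
  exact (continuous_exp.tendsto 0).comp hexp

end IsGumbelType

theorem isGumbelType_of_pow_eq {Φ : ℝ → ℝ} (hΦ : Monotone Φ) (hΦ0 : ∀ s, 0 ≤ Φ s) {s₀ : ℝ}
    (h0 : 0 < Φ s₀) (h1 : Φ s₀ < 1) {e : ℕ → ℝ}
    (he : ∀ m n, 0 < m → 0 < n → e (m * n) = e m + e n)
    (h : ∀ n, 0 < n → ∀ s, Φ s = Φ (s + e n) ^ n) : ∃ α > 0, ∃ β, IsGumbelType Φ α β := by
  have hroot : ∀ n, 0 < n → ∀ s, Φ (s + e n) = Φ s ^ ((n : ℝ)⁻¹) := fun n hn s => by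
    rw [h n hn s, Real.pow_rpow_inv_natCast (hΦ0 _) hn.ne']
  have hestrict : ∀ m n, 0 < m → m < n → e m < e n := by
    intro m n hm hmn
    have hlt : Φ (s₀ + e m) < Φ (s₀ + e n) := by
      rw [hroot m hm, hroot n (hm.trans hmn)]
      exact rpow_lt_rpow_of_exponent_gt h0 h1 (by gcongr)
    exact lt_of_not_ge fun hle => hlt.not_ge (hΦ (by linarith))
  have he1 : e 1 = 0 := by simpa using he 1 1 one_pos one_pos
  set τ := e 2 / log 2
  have hτ : 0 < τ := div_pos (he1 ▸ hestrict 1 2 one_pos one_lt_two) (log_pos one_lt_two)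
  have helog : ∀ n, 0 < n → e n = τ * log n := fun n hn =>
    eq_mul_log_of_add_of_monotone he
      (fun m n hm hmn => hmn.eq_or_lt.elim (fun h => h ▸ le_rfl) fun h => (hestrict m n hm h).le) hn
  have hunbdd : ∀ r, ∃ n, 0 < n ∧ r ≤ e n := fun r => by
    have := (tendsto_log_atTop.comp tendsto_natCast_atTop_atTop).const_mul_atTop hτ
    obtain ⟨n, hn, hrn⟩ := ((eventually_gt_atTop 0).and (this.eventually_ge_atTop r)).exists
    exact ⟨n, hn, (helog n hn).symm ▸ hrn⟩
  have hpos : ∀ s, 0 < Φ s := fun s => by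
    obtain ⟨n, hn, hr⟩ := hunbdd (s₀ - s)
    calc 0 < Φ s₀ ^ n := pow_pos h0 n
      _ = Φ (s₀ - e n) := by rw [h n hn (s₀ - e n), sub_add_cancel]
      _ ≤ Φ s := hΦ (by linarith)
  have hlt1 : ∀ s, Φ s < 1 := fun s => by
    obtain ⟨n, hn, hr⟩ := hunbdd (s - s₀)
    calc Φ s ≤ Φ (s₀ + e n) := hΦ (by linarith)
      _ = Φ s₀ ^ ((n : ℝ)⁻¹) := hroot n hn s₀
      _ < 1 := rpow_lt_one h0.le h1 (by positivity)
  have hK : ∀ s, 0 < -log (Φ s) := fun s => neg_pos.2 (log_neg (hpos s) (hlt1 s))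
  set φ := fun s => log (-log (Φ (τ * s)))
  have hφ : Antitone φ := fun s t hst =>
    log_le_log (hK _) (neg_le_neg (log_le_log (hpos _) (hΦ (by gcongr))))
  have hshift : ∀ n : ℕ, 0 < n → ∀ s, φ (s + log n) = φ s - log n := by
    intro n hn s
    have hn' : (n : ℝ) ≠ 0 := by positivity
    have := congrArg (fun y => log (-log y)) (h n hn (τ * s))
    simp only [log_pow, ← mul_neg, log_mul hn' (hK _).ne'] at this
    simp only [φ, mul_add, ← helog n hn]
    linarith
  refine ⟨τ⁻¹, inv_pos.2 hτ, -φ 0, fun s => ?_⟩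
  have hs := antitone_eq_sub_of_add_log hφ hshift (s / τ)
  simp only [φ, mul_div_cancel₀ s hτ.ne'] at hs
  rw [← exp_log (hpos s), ← neg_neg (log (Φ s)), ← exp_log (hK s), hs]
  congr 3
  simp only [φ]
  field_simp
  ring

theorem isFrechetType_of_pow_eq {H : ℝ → ℝ} (hH : Monotone H) (hH0 : ∀ x, 0 ≤ H x)
    {μ x₀ : ℝ} (hμ : μ < x₀) (h0 : 0 < H x₀) (h1 : H x₀ < 1) {c : ℕ → ℝ}
    (hc : ∀ n, 0 < n → 0 < c n) (hmul : ∀ m n, 0 < m → 0 < n → c (m * n) = c m * c n)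
    (h : ∀ n, 0 < n → ∀ t, H (μ + t) = H (μ + c n * t) ^ n) :
    ∃ a > 0, ∃ b, IsFrechetType H a b := by
  have hx₀ : H (μ + exp (log (x₀ - μ))) = H x₀ := by rw [exp_log (sub_pos.2 hμ), add_sub_cancel]
  obtain ⟨α, hα, β, hΦ⟩ := isGumbelType_of_pow_eq (Φ := fun s => H (μ + exp s))
    (e := fun n => log (c n)) (fun s t hst => hH (by gcongr)) (fun s => hH0 _)
    (hx₀ ▸ h0) (hx₀ ▸ h1)
    (fun m n hm hn => by rw [hmul m n hm hn, log_mul (hc m hm).ne' (hc n hn).ne'])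
    (fun n hn s => by rw [exp_add, exp_log (hc n hn), mul_comm]; exact h n hn _)
  set A := exp (β / α)
  have hA : ∀ x, A * x + -(A * μ) = A * (x - μ) := fun x => by ring
  refine ⟨A, exp_pos _, -(A * μ), α, hα, fun x => ⟨fun hx => ?_, fun hx => ?_⟩⟩
  · rw [hA, mul_nonpos_iff_pos_imp_nonpos, sub_nonpos] at hx
    have hxμ := hx.1 (exp_pos _)
    refine le_antisymm (ge_of_tendsto (hΦ.tendsto_atBot hα)
      (Eventually.of_forall fun s => hH ?_)) (hH0 x)
    linarith [exp_pos s]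
  · rw [hA] at hx ⊢
    have hxμ : 0 < x - μ := pos_of_mul_pos_right hx (exp_pos _).le
    have hΦx := hΦ (log (x - μ))
    simp only [exp_log hxμ, add_sub_cancel] at hΦx
    rw [hΦx, rpow_def_of_pos hx, log_mul (exp_pos _).ne' hxμ.ne', log_exp]
    congr 3
    field_simp
    ring

theorem isWeibullType_of_pow_eq {H : ℝ → ℝ} (hH : Monotone H) (hH0 : ∀ x, 0 ≤ H x)
    (hH1 : ∀ x, H x ≤ 1) {μ x₀ : ℝ} (hμ : x₀ < μ) (h0 : 0 < H x₀) (h1 : H x₀ < 1)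
    {c : ℕ → ℝ} (hc : ∀ n, 0 < n → 0 < c n)
    (hmul : ∀ m n, 0 < m → 0 < n → c (m * n) = c m * c n)
    (h : ∀ n, 0 < n → ∀ t, H (μ + t) = H (μ + c n * t) ^ n) :
    ∃ a > 0, ∃ b, IsWeibullType H a b := by
  have hx₀ : H (μ - exp (-(-log (μ - x₀)))) = H x₀ := by
    rw [neg_neg, exp_log (sub_pos.2 hμ), sub_sub_cancel]
  obtain ⟨α, hα, β, hΦ⟩ := isGumbelType_of_pow_eq (Φ := fun s => H (μ - exp (-s)))
    (e := fun n => -log (c n)) (fun s t hst => hH (by gcongr)) (fun s => hH0 _)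
    (hx₀ ▸ h0) (hx₀ ▸ h1)
    (fun m n hm hn => by rw [hmul m n hm hn, log_mul (hc m hm).ne' (hc n hn).ne', neg_add])
    (fun n hn s => by
      rw [neg_add, neg_neg, exp_add, exp_log (hc n hn), sub_eq_add_neg, sub_eq_add_neg,
        ← neg_mul, mul_comm]
      exact h n hn _)
  set A := exp (-β / α)
  have hA : ∀ x, A * x + -(A * μ) = A * (x - μ) := fun x => by ring
  have hone : ∀ x, μ ≤ x → H x = 1 := fun x hx =>
    le_antisymm (hH1 x) (le_of_tendsto (hΦ.tendsto_atTop hα)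
      (Eventually.of_forall fun s => hH (by linarith [exp_pos (-s)])))
  refine ⟨A, exp_pos _, -(A * μ), α, hα, fun x => ⟨fun hx => ?_, fun hx => ?_⟩⟩
  · rw [hA] at hx ⊢
    rcases hx.lt_or_eq with hx | hx
    · have hxμ : 0 < μ - x := by nlinarith [exp_pos (-β / α)]
      have hΦx := hΦ (-log (μ - x))
      simp only [neg_neg, exp_log hxμ, sub_sub_cancel] at hΦx
      rw [hΦx, show -(A * (x - μ)) = A * (μ - x) by ring, rpow_def_of_pos (by positivity),
        log_mul (exp_pos _).ne' hxμ.ne', log_exp]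
      congr 3
      field_simp
      ring
    · rw [hx, neg_zero, zero_rpow hα.ne', neg_zero, exp_zero]
      exact hone x (by nlinarith [exp_pos (-β / α)])
  · rw [hA] at hx
    exact hone x (sub_nonneg.1 (pos_of_mul_pos_right hx (exp_pos _).le).le)

/-- `h` says that `x ↦ c₁ * x + d₁` and `x ↦ c₂ * x + d₂` commute. -/
theorem fixed_point_of_affine_commute {c₁ d₁ c₂ d₂ : ℝ} (hc₁ : c₁ ≠ 1)
    (h : c₂ * d₁ + d₂ = c₁ * d₂ + d₁) : c₂ * (d₁ / (1 - c₁)) + d₂ = d₁ / (1 - c₁) := by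
  have : 1 - c₁ ≠ 0 := sub_ne_zero.2 (Ne.symm hc₁)
  field_simp
  linear_combination h

theorem IsMaxStable.exists_isGumbelType_or_isFrechetType_or_isWeibullType {H : ℝ → ℝ}
    (hms : IsMaxStable H) (hH : IsCDF H) (hnd : ∃ x, 0 < H x ∧ H x < 1) :
    ∃ a > 0, ∃ b, IsGumbelType H a b ∨ IsFrechetType H a b ∨ IsWeibullType H a b := by
  choose! c hc d hcd using hms
  have hcomp : ∀ m n, 0 < m → 0 < n →
      c (m * n) = c n * c m ∧ d (m * n) = c n * d m + d n := by
    intro m n hm hn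
    refine hH.affine_unique hnd (hc _ (by positivity)) (mul_pos (hc n hn) (hc m hm)) fun x => ?_
    refine (pow_left_inj₀ (hH.nonneg _) (hH.nonneg _) (by positivity : m * n ≠ 0)).1 ?_
    rw [← hcd _ (by positivity), hcd m hm x, hcd n hn, ← pow_mul, mul_comm n m]
    ring_nf
  obtain ⟨x₀, h0, h1⟩ := hnd
  by_cases htrans : ∀ n, 0 < n → c n = 1
  · obtain ⟨α, hα, β, hG⟩ := isGumbelType_of_pow_eq hH.monotone hH.nonneg h0 h1 (e := d)
      (fun m n hm hn => by rw [(hcomp m n hm hn).2, htrans n hn, one_mul])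
      (fun n hn x => by simpa [htrans n hn] using hcd n hn x)
    exact ⟨α, hα, β, Or.inl hG⟩
  push Not at htrans
  obtain ⟨N, hN, hcN⟩ := htrans
  set μ := d N / (1 - c N)
  have hscale : ∀ n, 0 < n → ∀ t, H (μ + t) = H (μ + c n * t) ^ n := fun n hn t => by
    have hfix := fixed_point_of_affine_commute hcN
      (by rw [← (hcomp N n hN hn).2, ← (hcomp n N hn hN).2, mul_comm])
    rw [hcd n hn (μ + t)]
    congr 2
    linear_combination hfix
  have hmul : ∀ m n, 0 < m → 0 < n → c (m * n) = c m * c n := fun m n hm hn => by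
    rw [(hcomp m n hm hn).1, mul_comm]
  rcases lt_trichotomy x₀ μ with hx₀ | rfl | hx₀
  · obtain ⟨a, ha, b, hW⟩ :=
      isWeibullType_of_pow_eq hH.monotone hH.nonneg hH.le_one hx₀ h0 h1 hc hmul hscale
    exact ⟨a, ha, b, Or.inr (Or.inr hW)⟩
  · have := hscale 2 two_pos 0
    simp only [mul_zero, add_zero] at this
    nlinarith
  · obtain ⟨a, ha, b, hFr⟩ :=
      isFrechetType_of_pow_eq hH.monotone hH.nonneg hx₀ h0 h1 hc hmul hscale
    exact ⟨a, ha, b, Or.inr (Or.inl hFr)⟩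

/-- **Fisher–Tippett–Gnedenko trichotomy.** If for some normalizing sequences
`a m > 0`, `b m` the normalized maxima distributions `F (x / a m + b m) ^ m`
converge (at continuity points) to a nondegenerate cdf `H`, then up to an affine
change of variables `H` is of Gumbel, Fréchet or Weibull type. -/
theorem fisher_tippett_gnedenko
    (F : ℝ → ℝ) (hF : IsCDF F)
    (a : ℕ → ℝ) (ha : ∀ m, 0 < a m) (b : ℕ → ℝ)
    (H : ℝ → ℝ) (hH : IsCDF H)
    (hnondeg : ∃ x, 0 < H x ∧ H x < 1)
    (hconv : ∀ x, ContinuousAt H x →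
      Filter.Tendsto (fun m : ℕ => (F (x / a m + b m)) ^ m) Filter.atTop (nhds (H x))) :
    ∃ a₀ > (0 : ℝ), ∃ b₀ : ℝ,
      -- Type 1 (Gumbel)
      (∀ x : ℝ, H x = Real.exp (-Real.exp (-(a₀ * x + b₀)))) ∨
      -- Type 2 (Fréchet)
      (∃ ξ > (0 : ℝ), ∀ x : ℝ,
        (a₀ * x + b₀ ≤ 0 → H x = 0) ∧
        (0 < a₀ * x + b₀ → H x = Real.exp (-(a₀ * x + b₀) ^ (-ξ)))) ∨
      -- Type 3 (Weibull)
      (∃ ξ > (0 : ℝ), ∀ x : ℝ,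
        (a₀ * x + b₀ ≤ 0 → H x = Real.exp (-(-(a₀ * x + b₀)) ^ ξ)) ∧
        (0 < a₀ * x + b₀ → H x = 1)) :=
  (isMaxStable_of_tendsto_pow hF ha hH hnondeg hconv)
    |>.exists_isGumbelType_or_isFrechetType_or_isWeibullType hH hnondeg
end

section
/- Let F : ℝ → ℝ be a continuous cumulative distribution function with F(x) < 1 for all x ∈ ℝ (so its right endpoint x_F = +∞), and suppose there exists ξ > 0 such that for every x > 0, lim_{t→+∞} (1 − F(t x))/(1 − F(t)) = x^{−ξ}. Define γ_m = inf{x : F(x) ≥ 1 − 1/m}. Then for every x > 0, lim_{m→∞} F(γ_m x)^m = exp(−x^{−ξ}). (That is, for the Fréchet type the normalizing sequences may be taken as a_m = γ_m^{−1} and b_m = 0.) -/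
open Filter Topology

namespace IsCDF

variable {F : ℝ → ℝ}

lemma bddBelow_setOf_le (hF : IsCDF F) {p : ℝ} (hp : 0 < p) : BddBelow {x | p ≤ F x} := by
  obtain ⟨x₀, hx₀⟩ := (hF.2.2.2.1.eventually (eventually_lt_nhds hp)).exists
  exact ⟨x₀, fun y hy => le_of_not_gt fun hyx => ((hF.1 hyx.le).trans_lt hx₀).not_ge hy⟩

lemma exists_eq_of_continuous (hF : IsCDF F) (hc : Continuous F) {p : ℝ} (hp₀ : 0 < p)
    (hp₁ : p < 1) : ∃ x, F x = p := by
  obtain ⟨a, ha⟩ := (hF.2.2.2.1.eventually (eventually_lt_nhds hp₀)).exists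
  obtain ⟨b, hb⟩ := (hF.2.2.2.2.eventually (eventually_gt_nhds hp₁)).exists
  exact intermediate_value_univ a b hc ⟨ha.le, hb.le⟩

lemma apply_sInf_setOf_le (hF : IsCDF F) (hc : Continuous F) {p : ℝ} (hp₀ : 0 < p)
    (hp₁ : p < 1) : F (sInf {x | p ≤ F x}) = p := by
  obtain ⟨y, hy⟩ := hF.exists_eq_of_continuous hc hp₀ hp₁
  have hbdd := hF.bddBelow_setOf_le hp₀
  apply le_antisymm
  · exact (hF.1 (csInf_le hbdd hy.ge)).trans hy.le
  · exact (isClosed_le continuous_const hc).csInf_mem ⟨y, hy.ge⟩ hbdd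

end IsCDF

lemma Monotone.tendsto_atTop_of_tendsto_of_forall_lt {α β ι : Type*} [LinearOrder α]
    [LinearOrder β] [TopologicalSpace β] [OrderTopology β] {F : α → β} (hF : Monotone F)
    {c : β} (hlt : ∀ x, F x < c) {γ : ι → α} {l : Filter ι}
    (h : Tendsto (fun i => F (γ i)) l (𝓝 c)) : Tendsto γ l atTop :=
  tendsto_atTop.2 fun M =>
    (h.eventually (eventually_gt_nhds (hlt M))).mono fun _ hm => (hF.reflect_lt hm).le

theorem gnedenko_frechet_normalization_general
    (F : ℝ → ℝ) (hF : IsCDF F) (hFcont : Continuous F)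
    (hlt : ∀ x, F x < 1)
    (ξ : ℝ)
    (hreg : ∀ x > (0 : ℝ), Filter.Tendsto (fun t : ℝ => (1 - F (t * x)) / (1 - F t))
      Filter.atTop (nhds (x ^ (-ξ))))
    (γ : ℕ → ℝ) (hγ : ∀ m : ℕ, γ m = sInf {x : ℝ | 1 - 1 / (m : ℝ) ≤ F x}) :
    ∀ x > (0 : ℝ), Filter.Tendsto (fun m : ℕ => (F (γ m * x)) ^ m)
      Filter.atTop (nhds (Real.exp (-(x ^ (-ξ))))) := by
  intro x hx
  have hFγ : ∀ᶠ m : ℕ in atTop, F (γ m) = 1 - 1 / m := by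
    filter_upwards [eventually_ge_atTop 2] with m hm
    have hm' : (2 : ℝ) ≤ m := by exact_mod_cast hm
    rw [hγ m]
    refine hF.apply_sInf_setOf_le hFcont ?_ ?_
    · rw [sub_pos, div_lt_one (by linarith)]
      linarith
    · exact sub_lt_self _ (by positivity)
  have hγ_top : Tendsto γ atTop atTop := by
    refine hF.1.tendsto_atTop_of_tendsto_of_forall_lt hlt ?_
    have hlevel : Tendsto (fun m : ℕ => 1 - 1 / (m : ℝ)) atTop (𝓝 1) := by
      simpa using tendsto_const_nhds (x := (1 : ℝ)) |>.sub tendsto_one_div_atTop_nhds_zero_nat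
    exact hlevel.congr' (hFγ.mono fun _ => Eq.symm)
  have htail : Tendsto (fun m : ℕ => m * (F (γ m * x) - 1)) atTop (𝓝 (-x ^ (-ξ))) := by
    refine ((hreg x hx).comp hγ_top).neg.congr' ?_
    filter_upwards [hFγ, eventually_ne_atTop 0] with m hm hm₀
    simp only [Function.comp_apply]
    rw [hm, sub_sub_cancel]
    field_simp
    ring
  simpa using Real.tendsto_one_add_pow_exp_of_tendsto htail

/-- **Gnedenko's corollary, Fréchet case.** If `F` is a continuous cdf with
`F x < 1` for all `x` (infinite right endpoint) whose tail is regularly varying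
with index `-ξ < 0`, then taking `γ m = inf {x | F x ≥ 1 - 1/m}` as normalizing
constants (`a m = (γ m)⁻¹`, `b m = 0`), the normalized maxima converge to the
Fréchet law: `F (γ m * x) ^ m → exp (-x ^ (-ξ))` for every `x > 0`. -/
theorem gnedenko_frechet_normalization
    (F : ℝ → ℝ) (hF : IsCDF F) (hFcont : Continuous F)
    (hlt : ∀ x, F x < 1)
    (ξ : ℝ) (hξ : 0 < ξ)
    (hreg : ∀ x > (0 : ℝ), Filter.Tendsto (fun t : ℝ => (1 - F (t * x)) / (1 - F t))
      Filter.atTop (nhds (x ^ (-ξ))))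
    (γ : ℕ → ℝ) (hγ : ∀ m : ℕ, γ m = sInf {x : ℝ | 1 - 1 / (m : ℝ) ≤ F x}) :
    ∀ x > (0 : ℝ), Filter.Tendsto (fun m : ℕ => (F (γ m * x)) ^ m)
      Filter.atTop (nhds (Real.exp (-(x ^ (-ξ))))) :=
  gnedenko_frechet_normalization_general F hF hFcont hlt ξ hreg γ hγ
end

section
/- Let F : ℝ → ℝ be a continuous cumulative distribution function with finite right endpoint x_F = sup{x : F(x) < 1} < ∞, and suppose there exists ξ > 0 such that for every x > 0, lim_{t→0+} (1 − F(x_F − t x))/(1 − F(x_F − t)) = x^{ξ}. Define γ_m = inf{x : F(x) ≥ 1 − 1/m}. Then for every x < 0, lim_{m→∞} F(x_F + x·(x_F − γ_m))^m = exp(−(−x)^{ξ}). (That is, for the Weibull type the normalizing sequences may be taken as a_m = (x_F − γ_m)^{−1} and b_m = x_F.) -/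
/-! By continuity of `F` the quantiles `γ m` satisfy `m (1 - F (γ m)) = 1` and increase to the
right endpoint `xF`. With `d m = xF - γ m → 0⁺`, regular variation of the tail then gives
`m (1 - F (xF - d m y)) → y ^ ξ`, and `(1 - c m / m) ^ m → exp (-c)` whenever `c m → c`. -/

open Filter Real Topology Set

theorem tendsto_one_sub_pow_exp_of_tendsto_div {G : ℝ → ℝ} {y L : ℝ} {f : Filter ℝ}
    {d : ℕ → ℝ} (hG : Tendsto (fun t => G (t * y) / G t) f (𝓝 L)) (hd : Tendsto d atTop f)
    (hscale : Tendsto (fun m : ℕ => m * G (d m)) atTop (𝓝 1)) :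
    Tendsto (fun m : ℕ => (1 - G (d m * y)) ^ m) atTop (𝓝 (exp (-L))) := by
  have hlim : Tendsto (fun m : ℕ => m * -G (d m * y)) atTop (𝓝 (-L)) := by
    have h := ((hG.comp hd).mul hscale).neg
    rw [mul_one] at h
    refine h.congr' ((hscale.eventually_ne one_ne_zero).mono fun m hm => ?_)
    have : G (d m) ≠ 0 := right_ne_zero_of_mul hm
    simp only [Function.comp_apply]
    field_simp
  simpa [sub_eq_add_neg] using Real.tendsto_one_add_pow_exp_of_tendsto hlim

theorem Monotone.tendsto_of_tendsto_comp {α β ι : Type*} [LinearOrder α] [TopologicalSpace α]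
    [OrderTopology α] [LinearOrder β] [TopologicalSpace β] [OrderTopology β] {F : α → β}
    (hF : Monotone F) {b : α} {c : β} (hlt : ∀ a < b, F a < c) {u : ι → α} {l : Filter ι}
    (hu : Tendsto (F ∘ u) l (𝓝 c)) (hub : ∀ᶠ i in l, u i ≤ b) :
    Tendsto u l (𝓝 b) := by
  refine tendsto_order.2 ⟨fun a ha => ?_, fun a ha => hub.mono fun i hi => hi.trans_lt ha⟩
  exact (hu.eventually (lt_mem_nhds (hlt a ha))).mono fun i hi => hF.reflect_lt hi

namespace IsCDF

variable {F : ℝ → ℝ}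

theorem lt_one_iff_lt_sSup (hF : IsCDF F) (hbdd : BddAbove {x | F x < 1}) (x : ℝ) :
    F x < 1 ↔ x < sSup {x | F x < 1} := by
  obtain ⟨hmono, hrc, -, hbot, -⟩ := hF
  constructor
  · intro hx
    obtain ⟨z, hz, hxz⟩ :=
      ((((hrc x).mono Ioi_subset_Ici_self).eventually (gt_mem_nhds hx)).and
        self_mem_nhdsWithin).exists
    exact lt_of_lt_of_le hxz (le_csSup hbdd hz)
  · intro hx
    have hne : {x | F x < 1}.Nonempty := (hbot.eventually (gt_mem_nhds one_pos)).exists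
    obtain ⟨a, ha, hxa⟩ := exists_lt_of_lt_csSup hne hx
    exact (hmono hxa.le).trans_lt ha

theorem apply_sInf_setOf_le_eq (hF : IsCDF F) (hc : Continuous F) {p : ℝ} (hp : p ∈ Ioo 0 1) :
    F (sInf {x | p ≤ F x}) = p := by
  obtain ⟨-, -, -, hbot, htop⟩ := hF
  set q := sInf {x | p ≤ F x}
  have hne : {x | p ≤ F x}.Nonempty := (htop.eventually (le_mem_nhds hp.2)).exists
  obtain ⟨b, hb⟩ := eventually_atBot.1 (hbot.eventually (gt_mem_nhds hp.1))
  have hbdd : BddBelow {x | p ≤ F x} :=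
    ⟨b, fun x hx => le_of_not_gt fun hxb => (hb x hxb.le).not_ge hx⟩
  refine le_antisymm ?_ ((isClosed_le continuous_const hc).csInf_mem hne hbdd)
  -- `F q ≤ p` by left continuity: every point left of `q` lies outside the set
  refine le_of_tendsto ((hc.tendsto q).mono_left (nhdsWithin_le_nhds (s := Iio q)))
    (eventually_nhdsWithin_of_forall fun x hx => ?_)
  exact le_of_not_ge fun h => (not_le.2 hx) (csInf_le hbdd h)

end IsCDF

theorem gnedenko_weibull_normalization_general
    (F : ℝ → ℝ) (hF : IsCDF F) (hFcont : Continuous F)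
    (hbdd : BddAbove {x : ℝ | F x < 1})
    (xF : ℝ) (hxF : xF = sSup {x : ℝ | F x < 1})
    (ξ : ℝ)
    (hreg : ∀ x > (0 : ℝ),
      Filter.Tendsto (fun t : ℝ => (1 - F (xF - t * x)) / (1 - F (xF - t)))
        (nhdsWithin 0 (Set.Ioi 0)) (nhds (x ^ ξ)))
    (γ : ℕ → ℝ) (hγ : ∀ m : ℕ, γ m = sInf {x : ℝ | 1 - 1 / (m : ℝ) ≤ F x}) :
    ∀ x < (0 : ℝ), Filter.Tendsto (fun m : ℕ => (F (xF + x * (xF - γ m))) ^ m)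
      Filter.atTop (nhds (Real.exp (-((-x) ^ ξ)))) := by
  intro x hx
  have hFγ : ∀ᶠ m : ℕ in atTop, F (γ m) = 1 - 1 / m ∧ γ m < xF := by
    filter_upwards [eventually_ge_atTop 2] with m hm
    have hm' : (2 : ℝ) ≤ m := by exact_mod_cast hm
    have hlevel : 1 - 1 / (m : ℝ) ∈ Ioo 0 1 :=
      ⟨sub_pos.2 ((div_lt_one (by linarith)).2 (by linarith)),
        sub_lt_self _ (one_div_pos.2 (by linarith))⟩
    have hFγm : F (γ m) = 1 - 1 / m := hγ m ▸ hF.apply_sInf_setOf_le_eq hFcont hlevel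
    exact ⟨hFγm, hxF ▸ (hF.lt_one_iff_lt_sSup hbdd _).1 (hFγm ▸ hlevel.2)⟩
  have hγ_tendsto : Tendsto γ atTop (𝓝 xF) := by
    refine hF.1.tendsto_of_tendsto_comp (c := 1) (fun a ha => ?_) ?_
      (hFγ.mono fun m hm => hm.2.le)
    · exact (hF.lt_one_iff_lt_sSup hbdd a).2 (hxF ▸ ha)
    · have h := tendsto_const_nhds (x := (1 : ℝ)).sub tendsto_one_div_atTop_nhds_zero_nat
      rw [sub_zero] at h
      exact h.congr' (hFγ.mono fun m hm => hm.1.symm)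
  have hd : Tendsto (fun m => xF - γ m) atTop (𝓝[>] 0) :=
    tendsto_nhdsWithin_of_tendsto_nhds_of_eventually_within _
      (by simpa using hγ_tendsto.const_sub xF) (hFγ.mono fun m hm => sub_pos.2 hm.2)
  have hscale : Tendsto (fun m : ℕ => m * (1 - F (xF - (xF - γ m)))) atTop (𝓝 1) := by
    refine tendsto_const_nhds.congr' ?_
    filter_upwards [hFγ, eventually_ne_atTop 0] with m hm hm0
    rw [sub_sub_cancel, hm.1, sub_sub_cancel, mul_one_div_cancel (Nat.cast_ne_zero.2 hm0)]
  refine (tendsto_one_sub_pow_exp_of_tendsto_div (G := fun t => 1 - F (xF - t))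
    (hreg (-x) (neg_pos.2 hx)) hd hscale).congr fun m => ?_
  simp only [sub_sub_cancel]
  ring_nf

/-- **Gnedenko's corollary, Weibull case.** If `F` is a continuous cdf with finite
right endpoint `xF = sup {x | F x < 1}` whose tail near `xF` is regularly varying
with index `ξ > 0`, then taking `a m = (xF - γ m)⁻¹` and `b m = xF` with
`γ m = inf {x | F x ≥ 1 - 1/m}` as normalizing constants, the normalized maxima
converge to the Weibull law: `F (xF + x * (xF - γ m)) ^ m → exp (-(-x) ^ ξ)`
for every `x < 0`. -/
theorem gnedenko_weibull_normalization
    (F : ℝ → ℝ) (hF : IsCDF F) (hFcont : Continuous F)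
    (hbdd : BddAbove {x : ℝ | F x < 1})
    (xF : ℝ) (hxF : xF = sSup {x : ℝ | F x < 1})
    (ξ : ℝ) (hξ : 0 < ξ)
    (hreg : ∀ x > (0 : ℝ),
      Filter.Tendsto (fun t : ℝ => (1 - F (xF - t * x)) / (1 - F (xF - t)))
        (nhdsWithin 0 (Set.Ioi 0)) (nhds (x ^ ξ)))
    (γ : ℕ → ℝ) (hγ : ∀ m : ℕ, γ m = sInf {x : ℝ | 1 - 1 / (m : ℝ) ≤ F x}) :
    ∀ x < (0 : ℝ), Filter.Tendsto (fun m : ℕ => (F (xF + x * (xF - γ m))) ^ m)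
      Filter.atTop (nhds (Real.exp (-((-x) ^ ξ)))) :=
  gnedenko_weibull_normalization_general F hF hFcont hbdd xF hxF ξ hreg γ hγ
end
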